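/- arXiv:1401.6824 — 7 statements merged into one kernel-verified Lean document; each statement's English description precedes it below -/
import Mathlib

section
/- If $f\in C^2[0,1]$, then for all $x\in[0,1]$ and $n\ge 1$, $|f(x)-B_n(f)(x)|\le \frac{x(1-x)}{2n}\|f''\|_\infty$, where $\|\cdot\|_\infty$ is the sup norm on $[0,1]$. -/
/-!
The Bernstein operator `f ↦ bern n f x` is positive on `[0, 1]`, reproduces affine functions and
sends `(· - x) ^ 2` to `x (1 - x) / n` at `x`. Hence `f x - bern n f x` is minus the Bernstein
average of the first-order Taylor remainder `f y - f x - f' x (y - x)`, which is bounded by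
`‖f''‖ / 2 * (y - x) ^ 2`; averaging this bound gives `‖f''‖ x (1 - x) / (2 n)`.
-/

/-- Bernstein polynomial of a function `f : ℝ → ℝ`. -/
noncomputable def bern (n : ℕ) (f : ℝ → ℝ) (x : ℝ) : ℝ :=
  ∑ k ∈ Finset.range (n + 1), (n.choose k : ℝ) * x ^ k * (1 - x) ^ (n - k) * f (k / n)

open Set Topology Polynomial

lemma bern_eq_sum_eval_bernsteinPolynomial (n : ℕ) (f : ℝ → ℝ) (x : ℝ) :
    bern n f x = ∑ k ∈ Finset.range (n + 1), (bernsteinPolynomial ℝ n k).eval x * f (k / n) := by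
  simp [bern, bernsteinPolynomial]

lemma bern_sub (n : ℕ) (f g : ℝ → ℝ) (x : ℝ) :
    bern n (fun y => f y - g y) x = bern n f x - bern n g x := by
  simp only [bern, mul_sub, Finset.sum_sub_distrib]

lemma bern_const_mul (n : ℕ) (c : ℝ) (f : ℝ → ℝ) (x : ℝ) :
    bern n (fun y => c * f y) x = c * bern n f x := by
  simp only [bern, Finset.mul_sum]
  exact Finset.sum_congr rfl fun _ _ => by ring

lemma bern_const (n : ℕ) (c x : ℝ) : bern n (fun _ => c) x = c := by
  have h := congr(($(bernsteinPolynomial.sum ℝ n)).eval x * c)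
  simp only [eval_finsetSum, eval_one, one_mul, Finset.sum_mul] at h
  rwa [bern_eq_sum_eval_bernsteinPolynomial]

lemma bern_id {n : ℕ} (hn : n ≠ 0) (x : ℝ) : bern n (fun y => y) x = x := by
  have h := congr(($(bernsteinPolynomial.sum_smul ℝ n)).eval x / n)
  simp only [eval_finsetSum, nsmul_eq_mul, eval_mul, eval_natCast, eval_X,
    Finset.sum_div] at h
  rw [bern_eq_sum_eval_bernsteinPolynomial]
  convert h using 1
  · exact Finset.sum_congr rfl fun _ _ => by ring
  · field_simp

lemma bern_sub_sq {n : ℕ} (hn : n ≠ 0) (x : ℝ) :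
    bern n (fun y => (y - x) ^ 2) x = x * (1 - x) / n := by
  have h := congr(($(bernsteinPolynomial.variance ℝ n)).eval x / n ^ 2)
  simp only [eval_finsetSum, eval_mul, eval_pow, eval_sub, nsmul_eq_mul, eval_X,
    eval_natCast, eval_one, Finset.sum_div] at h
  rw [bern_eq_sum_eval_bernsteinPolynomial]
  convert h using 1
  · exact Finset.sum_congr rfl fun _ _ => by field_simp; ring
  · field_simp

lemma bern_taylor_remainder {n : ℕ} (hn : n ≠ 0) (f : ℝ → ℝ) (c x : ℝ) :
    bern n (fun y => f y - f x - c * (y - x)) x = bern n f x - f x := by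
  rw [bern_sub n (fun y => f y - f x), bern_sub, bern_const, bern_const_mul, bern_sub, bern_id hn,
    bern_const]
  ring

lemma abs_bern_le {n : ℕ} {f g : ℝ → ℝ} {x : ℝ} (hx : x ∈ Icc (0 : ℝ) 1)
    (hfg : ∀ y ∈ Icc (0 : ℝ) 1, |f y| ≤ g y) : |bern n f x| ≤ bern n g x := by
  obtain ⟨hx0, hx1⟩ := hx
  have h1x : 0 ≤ 1 - x := sub_nonneg.2 hx1
  refine (Finset.abs_sum_le_sum_abs _ _).trans (Finset.sum_le_sum fun k hk => ?_)
  have hk : (k : ℝ) / n ∈ Icc (0 : ℝ) 1 :=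
    ⟨by positivity, div_le_one_of_le₀ (by exact_mod_cast Finset.mem_range_succ_iff.1 hk)
      n.cast_nonneg⟩
  rw [abs_mul, abs_of_nonneg (by positivity)]
  exact mul_le_mul_of_nonneg_left (hfg _ hk) (by positivity)

lemma abs_sub_sub_mul_le_of_abs_deriv_sub_le_of_le {s : Set ℝ} (hs : Convex ℝ s) {f f' : ℝ → ℝ}
    (hf : ∀ t ∈ s, HasDerivWithinAt f (f' t) s t) {a b M : ℝ} (ha : a ∈ s) (hb : b ∈ s)
    (hab : a ≤ b) (hf' : ∀ t ∈ s, |f' t - f' a| ≤ M * |t - a|) :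
    |f b - f a - f' a * (b - a)| ≤ M / 2 * (b - a) ^ 2 := by
  have hsub : Icc a b ⊆ s := hs.ordConnected.out ha hb
  have hderiv : ∀ t ∈ Ico a b, HasDerivWithinAt (fun t => f t - f a - f' a * (t - a))
      (f' t - f' a) (Ici t) t := by
    intro t ht
    have hts : s ∈ 𝓝[≥] t := Filter.mem_of_superset (Icc_mem_nhdsGE ht.2)
      (hs.ordConnected.out (hsub (Ico_subset_Icc_self ht)) hb)
    exact ((((hf t (hsub (Ico_subset_Icc_self ht))).mono_of_mem_nhdsWithin hts).sub_const
      (f a)).sub (((hasDerivAt_id t).sub_const a).const_mul (f' a)).hasDerivWithinAt).congr_deriv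
      (by ring)
  have hbound : ∀ t, HasDerivAt (fun t => M / 2 * (t - a) ^ 2) (M * (t - a)) t := fun t =>
    (((hasDerivAt_id t).sub_const a).pow 2 |>.const_mul (M / 2)).congr_deriv (by simp; ring)
  -- fence the remainder by `M / 2 * (t - a) ^ 2`, whose derivative dominates `|f' t - f' a|`
  refine image_norm_le_of_norm_deriv_right_le_deriv_boundary
    (fun t ht => ((hf t (hsub ht)).continuousWithinAt.mono hsub).sub continuousWithinAt_const
      |>.sub (by fun_prop)) hderiv (by simp) hbound (fun t ht => ?_) (right_mem_Icc.2 hab)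
  rw [Real.norm_eq_abs, ← abs_of_nonneg (sub_nonneg.2 ht.1)]
  exact hf' t (hsub (Ico_subset_Icc_self ht))

theorem abs_sub_sub_mul_le_of_abs_deriv_sub_le {s : Set ℝ} (hs : Convex ℝ s) {f f' : ℝ → ℝ}
    (hf : ∀ t ∈ s, HasDerivWithinAt f (f' t) s t) {a b M : ℝ} (ha : a ∈ s) (hb : b ∈ s)
    (hf' : ∀ t ∈ s, |f' t - f' a| ≤ M * |t - a|) :
    |f b - f a - f' a * (b - a)| ≤ M / 2 * (b - a) ^ 2 := by
  rcases le_total a b with hab | hba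
  · exact abs_sub_sub_mul_le_of_abs_deriv_sub_le_of_le hs hf ha hb hab hf'
  · -- reflect through `t ↦ -t`, which turns the case `b ≤ a` into the case already proved
    have hneg : ∀ t ∈ -s, HasDerivWithinAt (fun t => f (-t)) (-f' (-t)) (-s) t := fun t ht => by
      simpa [Function.comp_def] using (hf (-t) ht).comp t (hasDerivAt_neg t).hasDerivWithinAt
        (fun u hu => by simpa using hu)
    have := abs_sub_sub_mul_le_of_abs_deriv_sub_le_of_le (M := M) hs.neg hneg
      (neg_mem_neg.2 ha) (neg_mem_neg.2 hb) (neg_le_neg hba) fun t ht => by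
        simpa [abs_sub_comm, add_comm, ← sub_eq_add_neg] using hf' (-t) ht
    simp only [neg_neg] at this
    convert this using 2 <;> ring

theorem abs_sub_sub_derivWithin_mul_le_of_contDiffOn {s : Set ℝ} (hs : Convex ℝ s)
    (hs' : UniqueDiffOn ℝ s) {f : ℝ → ℝ} (hf : ContDiffOn ℝ 2 f s) {M : ℝ}
    (hM : ∀ t ∈ s, |derivWithin (derivWithin f s) s t| ≤ M) {a b : ℝ} (ha : a ∈ s) (hb : b ∈ s) :
    |f b - f a - derivWithin f s a * (b - a)| ≤ M / 2 * (b - a) ^ 2 := by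
  have hf' : ContDiffOn ℝ 1 (derivWithin f s) s := hf.derivWithin hs' (by norm_num)
  refine abs_sub_sub_mul_le_of_abs_deriv_sub_le hs
    (fun t ht => (hf.differentiableOn (by norm_num) t ht).hasDerivWithinAt) ha hb fun t ht => ?_
  simpa only [Real.norm_eq_abs] using
    hs.norm_image_sub_le_of_norm_derivWithin_le (hf'.differentiableOn one_ne_zero) hM ha ht

lemma IsCompact.abs_le_iSup_abs {X : Type*} [TopologicalSpace X] {s : Set X} {g : X → ℝ}
    (hs : IsCompact s) (hg : ContinuousOn g s) {y : X} (hy : y ∈ s) :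
    |g y| ≤ ⨆ z : s, |g z| :=
  le_ciSup (by simpa [image_eq_range] using (hs.image_of_continuousOn hg.abs).bddAbove)
    (⟨y, hy⟩ : s)

theorem bernstein_second_order_estimate (f : ℝ → ℝ)
    (hf : ContDiffOn ℝ 2 f (Set.Icc (0 : ℝ) 1))
    (n : ℕ) (hn : 1 ≤ n) (x : ℝ) (hx : x ∈ Set.Icc (0 : ℝ) 1) :
    |f x - bern n f x| ≤ x * (1 - x) / (2 * n) *
      ⨆ y : Set.Icc (0 : ℝ) 1,
        |derivWithin (derivWithin f (Set.Icc (0 : ℝ) 1)) (Set.Icc (0 : ℝ) 1) y| := by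
  set s := Icc (0 : ℝ) 1
  set M := ⨆ y : s, |derivWithin (derivWithin f s) s y|
  have hs : UniqueDiffOn ℝ s := uniqueDiffOn_Icc zero_lt_one
  have hf'' : ContinuousOn (derivWithin (derivWithin f s) s) s :=
    ((hf.derivWithin hs (m := 1) (by norm_num)).derivWithin hs (m := 0) (by norm_num)).continuousOn
  have htaylor : ∀ y ∈ s, |f y - f x - derivWithin f s x * (y - x)| ≤ M / 2 * (y - x) ^ 2 :=
    fun y hy => abs_sub_sub_derivWithin_mul_le_of_contDiffOn (convex_Icc 0 1) hs hf
      (fun t ht => isCompact_Icc.abs_le_iSup_abs hf'' ht) hx hy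
  have hn0 : n ≠ 0 := by omega
  calc |f x - bern n f x|
      = |bern n (fun y => f y - f x - derivWithin f s x * (y - x)) x| := by
        rw [bern_taylor_remainder hn0, abs_sub_comm]
    _ ≤ bern n (fun y => M / 2 * (y - x) ^ 2) x := abs_bern_le hx htaylor
    _ = x * (1 - x) / (2 * n) * M := by
        rw [bern_const_mul, bern_sub_sq hn0]
        field_simp
end

section
/- Let $B_n(f)(z)=\sum_{k=0}^n \binom{n}{k}z^k(1-z)^{n-k}f(k/n)$ be the complex Bernstein polynomial. For every $r\ge 1$, all $|z|\le r$, and all $n,k\in\mathbb{N}$, one has $|B_n(e_k)(z)|\le r^k$, where $e_k(z)=z^k$. -/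
open Complex

/-- Complex Bernstein polynomial of a function `f : ℂ → ℂ`. -/
noncomputable def bernC (n : ℕ) (f : ℂ → ℂ) (z : ℂ) : ℂ :=
  ∑ k ∈ Finset.range (n + 1), (n.choose k : ℂ) * z ^ k * (1 - z) ^ (n - k) * f ((k : ℂ) / n)

/-!
Write the Bernstein sum as a sum over subsets `S ⊆ {0, …, n-1}` and count `#S ^ k` as the number
of maps `g : Fin k → S`. Exchanging the two sums, the subsets containing the image of a fixed `g`
contribute exactly `z ^ #(image g)`, so that `n ^ k * B_n(e_k)(z) = ∑_{g : Fin k → Fin n} z ^ #(image g)`.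
This is a sum of `n ^ k` monomials of degree at most `k`, each bounded by `r ^ k` on `‖z‖ ≤ r`.
-/

open Finset

section Subsets

variable {ι R : Type*} [Fintype ι] [DecidableEq ι] [CommSemiring R]

-- Expand `∏ i, (x + (if i ∉ T then y else 0))` with `Finset.prod_add`.
theorem sum_ite_subset_pow_mul_pow (T : Finset ι) (x y : R) :
    ∑ S : Finset ι, (if T ⊆ S then x ^ #S * y ^ (Fintype.card ι - #S) else 0)
      = x ^ #T * (x + y) ^ (Fintype.card ι - #T) := by
  have h := prod_add (fun _ => x) (fun i => if i ∉ T then y else 0) univ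
  simp only [add_ite, add_zero, prod_const, powerset_univ, prod_ite_zero] at h
  rw [prod_ite, prod_const, prod_const, filter_notMem_eq_sdiff, card_univ_sdiff] at h
  simp only [not_not, filter_mem_eq_inter, univ_inter] at h
  rw [mul_comm, h]
  refine sum_congr rfl fun S _ => ?_
  have hTS : T ⊆ S ↔ ∀ i ∈ univ \ S, i ∉ T := by
    simp only [subset_iff, mem_sdiff, mem_univ, true_and]
    exact forall_congr' fun i => not_imp_not.symm
  rw [mul_ite, mul_zero, card_univ_sdiff]
  exact if_congr hTS rfl rfl

theorem card_pow_eq_sum_image_subset (S : Finset ι) (k : ℕ) :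
    (#S : R) ^ k = ∑ g : Fin k → ι, if univ.image g ⊆ S then 1 else 0 := by
  have h : ({g | univ.image g ⊆ S} : Finset (Fin k → ι)) = Fintype.piFinset fun _ => S := by
    ext g
    simp [image_subset_iff]
  rw [sum_boole, h, Fintype.card_piFinset, prod_const, card_univ, Fintype.card_fin, Nat.cast_pow]

theorem sum_pow_mul_pow_mul_card_pow (k : ℕ) (x y : R) :
    ∑ S : Finset ι, x ^ #S * y ^ (Fintype.card ι - #S) * (#S : R) ^ k
      = ∑ g : Fin k → ι, x ^ #(univ.image g) * (x + y) ^ (Fintype.card ι - #(univ.image g)) := by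
  simp_rw [card_pow_eq_sum_image_subset _ k, mul_sum, mul_ite, mul_one, mul_zero]
  rw [sum_comm]
  simp_rw [sum_ite_subset_pow_mul_pow]

end Subsets

theorem natCast_pow_mul_bernC_pow (n k : ℕ) (z : ℂ) :
    (n : ℂ) ^ k * bernC n (· ^ k) z = ∑ g : Fin k → Fin n, z ^ #(univ.image g) := by
  -- For `n = 0` only the node `j = 0` occurs, where `0 / 0 = 0` is harmless.
  have hnode : ∀ j ∈ range (n + 1), (n : ℂ) * (j / n) = j := fun j hj =>
    mul_div_cancel_of_imp' fun hn => by
      obtain rfl : n = 0 := by exact_mod_cast hn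
      simp_all
  have hsubsets := sum_pow_mul_pow_mul_card_pow (ι := Fin n) k z (1 - z)
  rw [Fintype.card_fin, add_sub_cancel] at hsubsets
  calc (n : ℂ) ^ k * bernC n (· ^ k) z
      = ∑ j ∈ range (n + 1), n.choose j • (z ^ j * (1 - z) ^ (n - j) * (j : ℂ) ^ k) := by
        rw [bernC, mul_sum]
        refine sum_congr rfl fun j hj => ?_
        rw [nsmul_eq_mul, show (j : ℂ) ^ k = n ^ k * (j / n) ^ k by rw [← mul_pow, hnode j hj]]
        ring
    _ = ∑ S : Finset (Fin n), z ^ #S * (1 - z) ^ (n - #S) * (#S : ℂ) ^ k := by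
        rw [← powerset_univ,
          sum_powerset_apply_card (fun m => z ^ m * (1 - z) ^ (n - m) * (m : ℂ) ^ k),
          card_univ, Fintype.card_fin]
    _ = ∑ g : Fin k → Fin n, z ^ #(univ.image g) := by
        simpa only [one_pow, mul_one] using hsubsets

theorem bernsteinC_monomial_bound (r : ℝ) (hr : 1 ≤ r) (n k : ℕ)
    (z : ℂ) (hz : ‖z‖ ≤ r) :
    ‖bernC n (fun w => w ^ k) z‖ ≤ r ^ k := by
  rcases Nat.eq_zero_or_pos n with rfl | hn
  · calc ‖bernC 0 (fun w => w ^ k) z‖ = ‖(0 : ℂ)‖ ^ k := by simp [bernC]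
      _ ≤ 1 := pow_le_one₀ (norm_nonneg _) (by simp)
      _ ≤ r ^ k := one_le_pow₀ hr
  have hterm (g : Fin k → Fin n) : ‖z ^ #(univ.image g)‖ ≤ r ^ k := by
    rw [norm_pow]
    calc ‖z‖ ^ #(univ.image g) ≤ r ^ #(univ.image g) := pow_le_pow_left₀ (norm_nonneg z) hz _
      _ ≤ r ^ k := pow_le_pow_right₀ hr (card_image_le.trans (by simp))
  have hscaled : (n : ℝ) ^ k * ‖bernC n (fun w => w ^ k) z‖ ≤ (n : ℝ) ^ k * r ^ k :=
    calc (n : ℝ) ^ k * ‖bernC n (fun w => w ^ k) z‖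
        = ‖∑ g : Fin k → Fin n, z ^ #(univ.image g)‖ := by
          rw [← natCast_pow_mul_bernC_pow, norm_mul, norm_pow, norm_natCast]
      _ ≤ ∑ _g : Fin k → Fin n, r ^ k := norm_sum_le_of_le _ fun g _ => hterm g
      _ = (n : ℝ) ^ k * r ^ k := by simp
  exact le_of_mul_le_mul_left hscaled (by positivity)
end

section
/- For the complex Bernstein polynomials, for every $r\ge 1$, all $|z|\le r$, and all $n,k\in\mathbb{N}$, one has $|B_n(e_k)(z)-z^k|\le \frac{3r(1+r)}{2n}k(k-1)r^{k-2}$, where $e_k(z)=z^k$. -/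
/-!
Expanding `m ^ k = ∑ j, S(k, j) m^(j)` in Stirling numbers of the second kind and falling
factorials `m^(j)`, and using
`∑ m, C(n, m) z^m (1 - z)^(n - m) m^(j) = n^(j) z^j` gives
`n^k B_n(e_k)(z) = ∑ j, S(k, j) n^(j) z^j`.
The coefficients sum to `n^k` and the top one is `n^(k)`, so
`n^k (B_n(e_k)(z) - z^k) = ∑ j < k, S(k, j) n^(j) (z^j - z^k)`, of norm at most
`(n^k - n^(k)) (r^(k-1) + r^k)`. Finally `n (n^k - n^(k)) ≤ C(k, 2) n^k`.
-/

open Complex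

open Finset

namespace Nat

theorem self_mul_descFactorial (m j : ℕ) :
    m * m.descFactorial j = m.descFactorial (j + 1) + j * m.descFactorial j := by
  rcases le_or_gt j m with h | h
  · rw [descFactorial_succ, ← Nat.add_mul, Nat.sub_add_cancel h]
  · simp [descFactorial_of_lt h]

theorem pow_eq_sum_stirlingSecond_mul_descFactorial (m k : ℕ) :
    m ^ k = ∑ j ∈ range (k + 1), stirlingSecond k j * m.descFactorial j := by
  induction k with
  | zero => simp
  | succ k ih =>
    have hshift : ∑ j ∈ range (k + 1), j * stirlingSecond k j * m.descFactorial j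
        = ∑ j ∈ range (k + 1), (j + 1) * stirlingSecond k (j + 1) * m.descFactorial (j + 1) := by
      have h := sum_range_succ' (fun j => j * stirlingSecond k j * m.descFactorial j) (k + 1)
      rw [sum_range_succ, stirlingSecond_eq_zero_of_lt (lt_succ_self k)] at h
      simpa using h
    calc m ^ (k + 1) = ∑ j ∈ range (k + 1), stirlingSecond k j * (m * m.descFactorial j) := by
          rw [pow_succ, ih, sum_mul]
          exact sum_congr rfl fun j _ => by ring
      _ = ∑ j ∈ range (k + 1), (stirlingSecond k j * m.descFactorial (j + 1)
            + j * stirlingSecond k j * m.descFactorial j) := by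
          simp only [self_mul_descFactorial]
          exact sum_congr rfl fun j _ => by ring
      _ = ∑ j ∈ range (k + 1), stirlingSecond (k + 1) (j + 1) * m.descFactorial (j + 1) := by
          rw [sum_add_distrib, hshift, ← sum_add_distrib]
          exact sum_congr rfl fun j _ => by rw [stirlingSecond_succ_succ]; ring
      _ = ∑ j ∈ range (k + 2), stirlingSecond (k + 1) j * m.descFactorial j := by
          simp [sum_range_succ' _ (k + 1)]

theorem choose_mul_descFactorial {n m j : ℕ} (hjm : j ≤ m) :
    n.choose m * m.descFactorial j = n.descFactorial j * (n - j).choose (m - j) := by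
  rw [descFactorial_eq_factorial_mul_choose, descFactorial_eq_factorial_mul_choose,
    mul_left_comm, choose_mul hjm, mul_assoc]

theorem mul_pow_le_mul_descFactorial_add (n k : ℕ) :
    n * n ^ k ≤ n * n.descFactorial k + k.choose 2 * n ^ k := by
  induction k with
  | zero => simp
  | succ k ih =>
    have hstep : n * n.descFactorial k ≤ n.descFactorial (k + 1) + k * n ^ k := by
      rw [self_mul_descFactorial]
      exact Nat.add_le_add_left (Nat.mul_le_mul_left k (descFactorial_le_pow n k)) _
    calc n * n ^ (k + 1) = n * (n * n ^ k) := by ring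
      _ ≤ n * (n * n.descFactorial k + k.choose 2 * n ^ k) := Nat.mul_le_mul_left n ih
      _ ≤ n * (n.descFactorial (k + 1) + k * n ^ k) + k.choose 2 * n ^ (k + 1) := by
          rw [pow_succ]; nlinarith [hstep]
      _ = n * n.descFactorial (k + 1) + (k + 1).choose 2 * n ^ (k + 1) := by
          rw [choose_succ_succ', choose_one_right, pow_succ]; ring

end Nat

open Nat

theorem sum_bernstein_mul_descFactorial {R : Type*} [CommRing R] (n j : ℕ) (x : R) :
    ∑ m ∈ range (n + 1), (n.choose m : R) * x ^ m * (1 - x) ^ (n - m) * m.descFactorial j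
      = n.descFactorial j * x ^ j := by
  rcases lt_or_ge n j with h | h
  · rw [descFactorial_of_lt h, Nat.cast_zero, zero_mul]
    refine sum_eq_zero fun m hm => ?_
    rw [descFactorial_of_lt ((mem_range_succ_iff.mp hm).trans_lt h), Nat.cast_zero, mul_zero]
  obtain ⟨l, rfl⟩ := Nat.exists_eq_add_of_le h
  have hbinom : ∑ i ∈ range (l + 1), x ^ i * (1 - x) ^ (l - i) * (l.choose i : R) = 1 := by
    simpa using (add_pow x (1 - x) l).symm
  rw [show j + l + 1 = j + (l + 1) by ring, sum_range_add,
    sum_eq_zero fun m hm => by rw [descFactorial_of_lt (mem_range.mp hm)]; simp, zero_add]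
  calc _ = (j + l).descFactorial j * x ^ j *
        ∑ i ∈ range (l + 1), x ^ i * (1 - x) ^ (l - i) * (l.choose i : R) := by
        rw [mul_sum]
        refine sum_congr rfl fun i _ => ?_
        have hcoef := congrArg (Nat.cast (R := R))
          (choose_mul_descFactorial (n := j + l) (Nat.le_add_right j i))
        rw [Nat.add_sub_cancel_left, Nat.add_sub_cancel_left, Nat.cast_mul, Nat.cast_mul] at hcoef
        rw [Nat.add_sub_add_left, pow_add]
        linear_combination (x ^ j * x ^ i * (1 - x) ^ (l - i)) * hcoef
    _ = _ := by rw [hbinom, mul_one]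

theorem natCast_pow_mul_bernC_pow_s9 {n : ℕ} (hn : n ≠ 0) (k : ℕ) (z : ℂ) :
    (n : ℂ) ^ k * bernC n (fun w => w ^ k) z
      = ∑ j ∈ range (k + 1), (stirlingSecond k j * n.descFactorial j : ℂ) * z ^ j := by
  have hpow (m : ℕ) : (n : ℂ) ^ k * ((m : ℂ) / n) ^ k
      = ∑ j ∈ range (k + 1), (stirlingSecond k j * m.descFactorial j : ℂ) := by
    rw [← mul_pow, mul_div_cancel₀ _ (Nat.cast_ne_zero.mpr hn)]
    exact_mod_cast pow_eq_sum_stirlingSecond_mul_descFactorial m k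
  calc _ = ∑ m ∈ range (n + 1), ∑ j ∈ range (k + 1), (stirlingSecond k j : ℂ) *
        ((n.choose m : ℂ) * z ^ m * (1 - z) ^ (n - m) * m.descFactorial j) := by
        rw [bernC, mul_sum]
        refine sum_congr rfl fun m _ => ?_
        rw [mul_left_comm, hpow, mul_sum]
        exact sum_congr rfl fun j _ => by ring
    _ = _ := by
        rw [sum_comm]
        refine sum_congr rfl fun j _ => ?_
        rw [← mul_sum, sum_bernstein_mul_descFactorial]
        ring

theorem natCast_pow_mul_bernC_pow_sub {n : ℕ} (hn : n ≠ 0) (k : ℕ) (z : ℂ) :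
    (n : ℂ) ^ k * (bernC n (fun w => w ^ k) z - z ^ k)
      = ∑ j ∈ range k, (stirlingSecond k j * n.descFactorial j : ℂ) * (z ^ j - z ^ k) := by
  have hn_pow : (n : ℂ) ^ k
      = ∑ j ∈ range (k + 1), (stirlingSecond k j * n.descFactorial j : ℂ) := by
    exact_mod_cast pow_eq_sum_stirlingSecond_mul_descFactorial n k
  rw [mul_sub, natCast_pow_mul_bernC_pow_s9 hn, hn_pow, sum_mul, sum_range_succ, sum_range_succ,
    stirlingSecond_self]
  simp only [mul_sub, sum_sub_distrib]
  ring

theorem norm_bernC_pow_sub_le {n : ℕ} (hn : n ≠ 0) (k : ℕ) {r : ℝ} (hr : 1 ≤ r) {z : ℂ}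
    (hz : ‖z‖ ≤ r) :
    (n : ℝ) ^ k * ‖bernC n (fun w => w ^ k) z - z ^ k‖
      ≤ ((n : ℝ) ^ k - n.descFactorial k) * (r ^ (k - 1) + r ^ k) := by
  have hsum : ∑ j ∈ range k, (stirlingSecond k j * n.descFactorial j : ℝ)
      = (n : ℝ) ^ k - n.descFactorial k := by
    have h : ((n ^ k : ℕ) : ℝ) = _ :=
      congrArg Nat.cast (pow_eq_sum_stirlingSecond_mul_descFactorial n k)
    push_cast at h
    rw [h, sum_range_succ, stirlingSecond_self, Nat.cast_one, one_mul, add_sub_cancel_right]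
  have hterm : ∀ j ∈ range k, ‖z ^ j - z ^ k‖ ≤ r ^ (k - 1) + r ^ k := by
    intro j hj
    have hjk : j ≤ k - 1 := by have := mem_range.mp hj; omega
    calc ‖z ^ j - z ^ k‖ ≤ ‖z‖ ^ j + ‖z‖ ^ k := by
          simpa only [norm_pow] using norm_sub_le (z ^ j) (z ^ k)
      _ ≤ r ^ (k - 1) + r ^ k := by
          gcongr
          exact (pow_le_pow_left₀ (norm_nonneg z) hz j).trans (pow_le_pow_right₀ hr hjk)
  calc (n : ℝ) ^ k * ‖bernC n (fun w => w ^ k) z - z ^ k‖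
      = ‖∑ j ∈ range k, (stirlingSecond k j * n.descFactorial j : ℂ) * (z ^ j - z ^ k)‖ := by
        rw [← natCast_pow_mul_bernC_pow_sub hn, norm_mul, norm_pow, Complex.norm_natCast]
    _ ≤ ∑ j ∈ range k, (stirlingSecond k j * n.descFactorial j : ℝ) * (r ^ (k - 1) + r ^ k) := by
        refine (norm_sum_le _ _).trans (sum_le_sum fun j hj => ?_)
        rw [norm_mul, norm_mul, Complex.norm_natCast, Complex.norm_natCast]
        exact mul_le_mul_of_nonneg_left (hterm j hj) (by positivity)
    _ = _ := by rw [← sum_mul, hsum]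

theorem choose_two_mul_pow_pred_add_pow {K : Type*} [Field K] [CharZero K] (k : ℕ) (r : K) :
    (k.choose 2 : K) * (r ^ (k - 1) + r ^ k) = k * (k - 1) / 2 * (r * (1 + r) * r ^ (k - 2)) := by
  rw [cast_choose_two]
  rcases lt_or_ge k 2 with hk | hk
  · interval_cases k <;> simp
  · obtain ⟨m, rfl⟩ := Nat.exists_eq_add_of_le' hk
    rw [show m + 2 - 1 = m + 1 by omega, Nat.add_sub_cancel]
    ring

theorem natCast_mul_norm_bernC_pow_sub_le {n : ℕ} (hn : n ≠ 0) (k : ℕ) {r : ℝ} (hr : 1 ≤ r)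
    {z : ℂ} (hz : ‖z‖ ≤ r) :
    n * ‖bernC n (fun w => w ^ k) z - z ^ k‖ ≤ k * (k - 1) / 2 * (r * (1 + r) * r ^ (k - 2)) := by
  have hdesc : (n : ℝ) * ((n : ℝ) ^ k - n.descFactorial k) ≤ k.choose 2 * (n : ℝ) ^ k := by
    rw [mul_sub, sub_le_iff_le_add']
    exact_mod_cast mul_pow_le_mul_descFactorial_add n k
  rw [← choose_two_mul_pow_pred_add_pow]
  refine le_of_mul_le_mul_left ?_ (pow_pos (Nat.cast_pos.mpr (Nat.pos_of_ne_zero hn)) k)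
  calc (n : ℝ) ^ k * (n * ‖bernC n (fun w => w ^ k) z - z ^ k‖)
      = n * ((n : ℝ) ^ k * ‖bernC n (fun w => w ^ k) z - z ^ k‖) := by ring
    _ ≤ n * ((n : ℝ) ^ k - n.descFactorial k) * (r ^ (k - 1) + r ^ k) := by
        rw [mul_assoc]
        exact mul_le_mul_of_nonneg_left (norm_bernC_pow_sub_le hn k hr hz) n.cast_nonneg
    _ ≤ k.choose 2 * (n : ℝ) ^ k * (r ^ (k - 1) + r ^ k) := by gcongr
    _ = (n : ℝ) ^ k * (k.choose 2 * (r ^ (k - 1) + r ^ k)) := by ring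

theorem bernsteinC_monomial_approx (r : ℝ) (hr : 1 ≤ r) (n k : ℕ) (hn : 1 ≤ n)
    (z : ℂ) (hz : ‖z‖ ≤ r) :
    ‖bernC n (fun w => w ^ k) z - z ^ k‖ ≤
      3 * r * (1 + r) / (2 * n) * ((k : ℝ) * ((k : ℝ) - 1)) * r ^ (k - 2) := by
  have hn₀ : (0 : ℝ) < n := by exact_mod_cast hn
  have hsharp := natCast_mul_norm_bernC_pow_sub_le (n := n) (by omega) k hr hz
  rw [← le_div_iff₀' hn₀] at hsharp
  have hbound_nonneg : 0 ≤ (k : ℝ) * (k - 1) / 2 * (r * (1 + r) * r ^ (k - 2)) := by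
    have hr₀ : 0 ≤ r := by linarith
    rw [← cast_choose_two]
    positivity
  calc _ ≤ k * (k - 1) / 2 * (r * (1 + r) * r ^ (k - 2)) / n := hsharp
    _ ≤ 3 * (k * (k - 1) / 2 * (r * (1 + r) * r ^ (k - 2))) / n :=
        div_le_div_of_nonneg_right (by linarith) hn₀.le
    _ = _ := by field_simp
end

section
/- Assuming the bounds $|B_n(e_k)(z)|\le r^k$ and $|B_n(e_k)(z)-z^k|\le \frac{3r(1+r)}{2n}k(k-1)r^{k-2}$ for all $k$ and $|z|\le r$ with $r\ge 1$, it follows that for all $0\le j\le m$, $n\ge 1$, and $|z|\le r$: $|B_n(e_m)(z)-B_n(e_j)(z)B_n(e_{m-j})(z)|\le \frac{6(1+r)}{n} m^2 r^{m-1}$. -/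
open Complex

/-!
Since `zᵐ = zʲ zᵐ⁻ʲ`, the defect `Bₙ(eₘ) - Bₙ(eⱼ) Bₙ(eₘ₋ⱼ)` splits as
`(Bₙ(eₘ) - zᵐ) + (zʲ - Bₙ(eⱼ)) zᵐ⁻ʲ + Bₙ(eⱼ) (zᵐ⁻ʲ - Bₙ(eₘ₋ⱼ))`. The approximation errors carry the
weight `k (k - 1) rᵏ⁻²`, the second derivative of `xᵏ` at `r`, and the uniform bounds `rᵐ⁻ʲ`, `rʲ`
complete the weights of the last two terms to at most that of `eₘ`; so the defect is at most three
times the error bound for `eₘ`.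
-/

theorem norm_sub_mul_le_of_le {R : Type*} [SeminormedRing R] {c a b x y : R} {ε α β A Y : ℝ}
    (hc : ‖c - x * y‖ ≤ ε) (ha : ‖x - a‖ ≤ α) (hy : ‖y‖ ≤ Y) (hA : ‖a‖ ≤ A) (hb : ‖y - b‖ ≤ β) :
    ‖c - a * b‖ ≤ ε + α * Y + A * β := by
  have hsplit : c - a * b = (c - x * y) + (x - a) * y + a * (y - b) := by noncomm_ring
  calc ‖c - a * b‖ ≤ ‖c - x * y‖ + ‖x - a‖ * ‖y‖ + ‖a‖ * ‖y - b‖ := by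
        rw [hsplit]
        refine norm_add₃_le.trans ?_
        gcongr <;> exact norm_mul_le _ _
    _ ≤ ε + α * Y + A * β := by
        gcongr
        exacts [(norm_nonneg _).trans ha, (norm_nonneg _).trans hA]

def powSecondDeriv (r : ℝ) (k : ℕ) : ℝ :=
  (k : ℝ) * ((k : ℝ) - 1) * r ^ (k - 2)

namespace powSecondDeriv

variable {r : ℝ} {k m : ℕ}

theorem nonneg (hr : 0 ≤ r) : 0 ≤ powSecondDeriv r k := by
  unfold powSecondDeriv
  rcases k with _ | k
  · simp
  · push_cast
    rw [add_sub_cancel_right]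
    positivity

theorem mul_pow_sub_le (hr : 0 ≤ r) (hkm : k ≤ m) :
    powSecondDeriv r k * r ^ (m - k) ≤ powSecondDeriv r m := by
  rcases lt_or_ge k 2 with hk | hk
  · have hk0 : powSecondDeriv r k = 0 := by interval_cases k <;> simp [powSecondDeriv]
    rw [hk0, zero_mul]
    exact nonneg hr
  · have hpow : r ^ (k - 2) * r ^ (m - k) = r ^ (m - 2) := by rw [← pow_add]; congr 1; omega
    have hkm' : (k : ℝ) ≤ m := by exact_mod_cast hkm
    have hk' : (2 : ℝ) ≤ k := by exact_mod_cast hk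
    rw [powSecondDeriv, powSecondDeriv, mul_assoc, hpow]
    gcongr
    nlinarith

theorem add_mul_pow_add_pow_mul_le (hr : 0 ≤ r) {j : ℕ} (hj : j ≤ m) :
    powSecondDeriv r m + powSecondDeriv r j * r ^ (m - j) + r ^ j * powSecondDeriv r (m - j) ≤
      3 * powSecondDeriv r m := by
  have hfirst := mul_pow_sub_le hr hj
  have hsecond := mul_pow_sub_le hr (Nat.sub_le m j)
  rw [Nat.sub_sub_self hj] at hsecond
  linarith [mul_comm (r ^ j) (powSecondDeriv r (m - j))]

theorem mul_le (hr : 0 ≤ r) : powSecondDeriv r m * r ≤ (m : ℝ) ^ 2 * r ^ (m - 1) := by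
  rcases lt_or_ge m 2 with hm | hm
  · interval_cases m <;> simp [powSecondDeriv]
  · have hpow : r ^ (m - 2) * r = r ^ (m - 1) := by rw [← pow_succ]; congr 1; omega
    rw [powSecondDeriv, mul_assoc, hpow]
    gcongr
    nlinarith

end powSecondDeriv

theorem bernsteinC_monomial_product_bound_general (r : ℝ) (n : ℕ)
    (hbd : ∀ k : ℕ, ∀ z : ℂ, ‖z‖ ≤ r → ‖bernC n (fun w => w ^ k) z‖ ≤ r ^ k)
    (happrox : ∀ k : ℕ, ∀ z : ℂ, ‖z‖ ≤ r →
      ‖bernC n (fun w => w ^ k) z - z ^ k‖ ≤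
        3 * r * (1 + r) / (2 * n) * ((k : ℝ) * ((k : ℝ) - 1)) * r ^ (k - 2))
    (m j : ℕ) (hj : j ≤ m) (z : ℂ) (hz : ‖z‖ ≤ r) :
    ‖bernC n (fun w => w ^ m) z -
        bernC n (fun w => w ^ j) z * bernC n (fun w => w ^ (m - j)) z‖ ≤
      6 * (1 + r) / n * (m : ℝ) ^ 2 * r ^ (m - 1) := by
  have hr : 0 ≤ r := (norm_nonneg z).trans hz
  set C : ℝ := 3 * r * (1 + r) / (2 * n)
  have hB (k : ℕ) : ‖z ^ k - bernC n (fun w => w ^ k) z‖ ≤ C * powSecondDeriv r k :=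
    (norm_sub_rev _ _).trans_le ((happrox k z hz).trans_eq (mul_assoc _ _ _))
  have hzpow : ‖z ^ (m - j)‖ ≤ r ^ (m - j) := by
    rw [norm_pow]; exact pow_le_pow_left₀ (norm_nonneg z) hz _
  have hsplit : z ^ j * z ^ (m - j) = z ^ m := by rw [← pow_add, Nat.add_sub_cancel' hj]
  have hC : 3 * C ≤ 6 * (1 + r) / n * r := by
    rw [show 3 * C = 9 / 2 * (1 + r) / n * r by simp only [C]; ring]
    gcongr
    norm_num
  calc _ ≤ C * powSecondDeriv r m + C * powSecondDeriv r j * r ^ (m - j)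
          + r ^ j * (C * powSecondDeriv r (m - j)) :=
        norm_sub_mul_le_of_le (by rw [hsplit, norm_sub_rev]; exact hB m) (hB j) hzpow (hbd j z hz)
          (hB (m - j))
    _ = C * (powSecondDeriv r m + powSecondDeriv r j * r ^ (m - j)
          + r ^ j * powSecondDeriv r (m - j)) := by ring
    _ ≤ 3 * C * powSecondDeriv r m := by
        rw [mul_assoc 3, mul_left_comm]
        gcongr
        exact powSecondDeriv.add_mul_pow_add_pow_mul_le hr hj
    _ ≤ 6 * (1 + r) / n * (powSecondDeriv r m * r) := by
        nlinarith [mul_le_mul_of_nonneg_right hC (powSecondDeriv.nonneg hr (k := m))]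
    _ ≤ 6 * (1 + r) / n * (m : ℝ) ^ 2 * r ^ (m - 1) :=
        (mul_le_mul_of_nonneg_left (powSecondDeriv.mul_le hr) (by positivity)).trans_eq
          (mul_assoc _ _ _).symm

theorem bernsteinC_monomial_product_bound (r : ℝ) (hr : 1 ≤ r) (n : ℕ) (hn : 1 ≤ n)
    (hbd : ∀ k : ℕ, ∀ z : ℂ, ‖z‖ ≤ r → ‖bernC n (fun w => w ^ k) z‖ ≤ r ^ k)
    (happrox : ∀ k : ℕ, ∀ z : ℂ, ‖z‖ ≤ r →
      ‖bernC n (fun w => w ^ k) z - z ^ k‖ ≤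
        3 * r * (1 + r) / (2 * n) * ((k : ℝ) * ((k : ℝ) - 1)) * r ^ (k - 2))
    (m j : ℕ) (hj : j ≤ m) (z : ℂ) (hz : ‖z‖ ≤ r) :
    ‖bernC n (fun w => w ^ m) z -
        bernC n (fun w => w ^ j) z * bernC n (fun w => w ^ (m - j)) z‖ ≤
      6 * (1 + r) / n * (m : ℝ) ^ 2 * r ^ (m - 1) :=
  bernsteinC_monomial_product_bound_general r n hbd happrox m j hj z hz
end

section
/- Let $R>1$ and $f(z)=\sum_{k=0}^\infty a_k z^k$, $g(z)=\sum_{k=0}^\infty b_k z^k$ be analytic on $\{|z|<R\}$. Then for $1\le r<R$ and all $n\ge 1$, $\sup_{|z|\le r}|B_n(fg)(z)-B_n(f)(z)B_n(g)(z)|\le \frac{6(1+r)}{n}\sum_{m=0}^\infty m^2\big(\sum_{j=0}^m |a_j||b_{m-j}|\big) r^{m-1}$, and the series on the right is finite. -/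
/-!
Expanding the binomial weights over subsets `S` of `Fin n` (the weights of the sets containing a
fixed `T` add up to `z ^ #T`) gives `B_n(w^k)(z) = n^{-k} ∑_{φ : Fin k → Fin n} z ^ #(range φ)`.
Concatenating tuples, `B_n(w^{k+j}) - B_n(w^k) B_n(w^j)` becomes `n^{-(k+j)}` times a sum over
pairs `(φ, ψ)` whose terms vanish unless the ranges of `φ` and `ψ` meet; there are at most
`k j n^{k+j-1}` such pairs and each term is at most `2 r^{k+j}` on `|z| ≤ r`, so the difference
is at most `2 k j r^{k+j} / n`. As the nodes `k / n` lie in the closed unit disc, `B_n f`, `B_n g` and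
`B_n (f g)` are the corresponding series in the Bernstein monomials, absolutely convergent for
`|z| ≤ r < R`, and summing the monomial estimate against the Cauchy product gives the bound.
-/

open Complex

open Finset

namespace Finset

theorem sum_powerset_ite_subset_pow_mul_one_sub_pow {α R : Type*} [Fintype α]
    [DecidableEq α] [CommRing R] (T : Finset α) (z : R) :
    ∑ S ∈ (univ : Finset α).powerset,
      (if T ⊆ S then z ^ #S * (1 - z) ^ (Fintype.card α - #S) else 0) = z ^ #T := by
  have key := prod_add (fun _ ↦ z) (fun i ↦ if i ∈ T then 0 else 1 - z) (univ : Finset α)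
  simp only [add_ite, add_zero, add_sub_cancel, prod_ite_mem, univ_inter, prod_const] at key
  rw [key]
  refine sum_congr rfl fun S _ ↦ ?_
  split_ifs with hTS
  · rw [prod_ite_of_false fun i hi ↦ ?_, prod_const, card_univ_sdiff]
    exact fun hiT ↦ (mem_sdiff.1 hi).2 (hTS hiT)
  · obtain ⟨i, hiT, hiS⟩ := not_subset.1 hTS
    rw [Finset.prod_eq_zero (mem_sdiff.2 ⟨mem_univ i, hiS⟩) (by simp [hiT]), mul_zero]

theorem card_pow_eq_sum_ite_image_subset {α R : Type*} [Fintype α] [DecidableEq α]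
    [Semiring R] (S : Finset α) (k : ℕ) :
    (#S : R) ^ k = ∑ φ : Fin k → α, if univ.image φ ⊆ S then 1 else 0 := by
  rw [sum_boole, ← Nat.cast_pow, ← Fintype.card_piFinset_const]
  congr 2
  ext φ
  simp [image_subset_iff]

theorem image_univ_append {α : Type*} [DecidableEq α] {k j : ℕ} (φ : Fin k → α) (ψ : Fin j → α) :
    univ.image (Fin.append φ ψ) = univ.image φ ∪ univ.image ψ := by
  ext v
  simp only [mem_image, mem_univ, true_and, mem_union, ← not_forall_not (α := Fin (k + j)),
    Fin.forall_fin_add, Fin.append_left, Fin.append_right, not_and_or, not_forall_not]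

theorem card_image_univ_le {α : Type*} [DecidableEq α] {k : ℕ} (φ : Fin k → α) :
    #(univ.image φ) ≤ k :=
  card_image_le.trans_eq (card_fin k)

end Finset

theorem card_mul_card_filter_apply_eq_apply {ι κ β : Type*} [Fintype ι] [Fintype κ] [Fintype β]
    [DecidableEq ι] [DecidableEq κ] [DecidableEq β] (i : ι) (i' : κ) :
    Fintype.card β * #{p : (ι → β) × (κ → β) | p.1 i = p.2 i'} =
      Fintype.card β ^ (Fintype.card ι + Fintype.card κ) := by
  have hfiber (φ : ι → β) :
      #{ψ : κ → β | φ i = ψ i'} = Fintype.card β ^ (Fintype.card κ - 1) := by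
    simpa [Fintype.piFinset_univ, eq_comm] using
      Fintype.card_filter_piFinset_const_eq_of_mem (univ : Finset β) i' (mem_univ (φ i))
  have hκ : 0 < Fintype.card κ := Fintype.card_pos_iff.2 ⟨i'⟩
  rw [card_filter, Fintype.sum_prod_type]
  simp_rw [← card_filter, hfiber, sum_const, card_univ, Fintype.card_fun, smul_eq_mul]
  rw [← pow_add, ← pow_succ']
  congr 1
  omega

theorem card_mul_sum_card_filter_apply_eq_apply {ι κ β : Type*} [Fintype ι] [Fintype κ]
    [Fintype β] [DecidableEq ι] [DecidableEq κ] [DecidableEq β] :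
    Fintype.card β * ∑ p : (ι → β) × (κ → β), #{st : ι × κ | p.1 st.1 = p.2 st.2} =
      Fintype.card ι * Fintype.card κ * Fintype.card β ^ (Fintype.card ι + Fintype.card κ) := by
  simp_rw [card_filter]
  rw [sum_comm, mul_sum]
  simp_rw [← card_filter, card_mul_card_filter_apply_eq_apply, sum_const, card_univ,
    Fintype.card_prod, smul_eq_mul]

theorem norm_pow_le_pow_of_le {𝕜 : Type*} [NormedDivisionRing 𝕜] {z : 𝕜} {r : ℝ} (hr : 1 ≤ r)
    (hz : ‖z‖ ≤ r) {m k : ℕ} (hmk : m ≤ k) : ‖z ^ m‖ ≤ r ^ k := by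
  rw [norm_pow]
  exact (pow_le_pow_left₀ (norm_nonneg z) hz m).trans (pow_le_pow_right₀ hr hmk)

theorem bernC_eq_sum_powerset (n : ℕ) (F : ℂ → ℂ) (z : ℂ) :
    bernC n F z = ∑ S ∈ (univ : Finset (Fin n)).powerset,
      z ^ #S * (1 - z) ^ (n - #S) * F (#S / n) := by
  rw [sum_powerset_apply_card (fun m ↦ z ^ m * (1 - z) ^ (n - m) * F (m / n)), card_univ,
    Fintype.card_fin, bernC]
  refine sum_congr rfl fun m _ ↦ ?_
  rw [nsmul_eq_mul]
  ring

theorem bernC_pow (n k : ℕ) (z : ℂ) :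
    bernC n (· ^ k) z = (∑ φ : Fin k → Fin n, z ^ #(univ.image φ)) / (n : ℂ) ^ k := by
  simp_rw [bernC_eq_sum_powerset, div_pow, mul_div_assoc', card_pow_eq_sum_ite_image_subset,
    mul_sum, mul_ite, mul_one, mul_zero, ← sum_div]
  rw [sum_comm]
  congr 1
  refine sum_congr rfl fun φ _ ↦ ?_
  simpa using sum_powerset_ite_subset_pow_mul_one_sub_pow (univ.image φ) z

theorem norm_bernC_pow_le (n k : ℕ) {r : ℝ} (hr : 1 ≤ r) {z : ℂ} (hz : ‖z‖ ≤ r) :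
    ‖bernC n (· ^ k) z‖ ≤ r ^ k := by
  rw [bernC_pow, norm_div, norm_pow, Complex.norm_natCast]
  refine div_le_of_le_mul₀ (by positivity) (by positivity) ?_
  calc ‖∑ φ : Fin k → Fin n, z ^ #(univ.image φ)‖ ≤ ∑ _φ : Fin k → Fin n, r ^ k :=
        norm_sum_le_of_le _ fun φ _ ↦ norm_pow_le_pow_of_le hr hz (card_image_univ_le φ)
    _ = r ^ k * n ^ k := by simp [mul_comm]

theorem norm_pow_card_image_union_sub_le {α : Type*} [DecidableEq α] {k j : ℕ} (φ : Fin k → α)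
    (ψ : Fin j → α) {r : ℝ} (hr : 1 ≤ r) {z : ℂ} (hz : ‖z‖ ≤ r) :
    ‖z ^ #(univ.image φ ∪ univ.image ψ) - z ^ #(univ.image φ) * z ^ #(univ.image ψ)‖ ≤
      2 * r ^ (k + j) * #{st : Fin k × Fin j | φ st.1 = ψ st.2} := by
  by_cases hdisj : Disjoint (univ.image φ) (univ.image ψ)
  · rw [card_union_of_disjoint hdisj, pow_add, sub_self, norm_zero]
    positivity
  obtain ⟨v, hv₁, hv₂⟩ := not_disjoint_iff.1 hdisj
  obtain ⟨s, -, rfl⟩ := mem_image.1 hv₁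
  obtain ⟨t, -, ht⟩ := mem_image.1 hv₂
  have hcollision : (1 : ℝ) ≤ #{st : Fin k × Fin j | φ st.1 = ψ st.2} := by
    exact_mod_cast card_pos.2 ⟨(s, t), by simp [ht]⟩
  have hk := card_image_univ_le φ
  have hj := card_image_univ_le ψ
  calc _ ≤ ‖z ^ #(univ.image φ ∪ univ.image ψ)‖ + ‖z ^ (#(univ.image φ) + #(univ.image ψ))‖ := by
        rw [pow_add]
        exact norm_sub_le _ _
    _ ≤ r ^ (k + j) + r ^ (k + j) := add_le_add
        (norm_pow_le_pow_of_le hr hz ((card_union_le _ _).trans (add_le_add hk hj)))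
        (norm_pow_le_pow_of_le hr hz (add_le_add hk hj))
    _ ≤ _ := by rw [← two_mul]; exact le_mul_of_one_le_right (by positivity) hcollision

theorem norm_bernC_pow_add_sub_mul_le (n k j : ℕ) {r : ℝ} (hr : 1 ≤ r) {z : ℂ} (hz : ‖z‖ ≤ r) :
    ‖bernC n (· ^ (k + j)) z - bernC n (· ^ k) z * bernC n (· ^ j) z‖ ≤
      2 * k * j * r ^ (k + j) / n := by
  rcases n.eq_zero_or_pos with rfl | hn
  -- `bernC 0 F z = F 0` because `(0 : ℂ) / 0 = 0`, and the right side is `_ / 0 = 0`.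
  · simp [bernC, pow_add]
  have hsplit : bernC n (· ^ (k + j)) z - bernC n (· ^ k) z * bernC n (· ^ j) z =
      (∑ p : (Fin k → Fin n) × (Fin j → Fin n), (z ^ #(univ.image p.1 ∪ univ.image p.2) -
        z ^ #(univ.image p.1) * z ^ #(univ.image p.2))) / (n : ℂ) ^ (k + j) := by
    rw [bernC_pow, bernC_pow, bernC_pow, div_mul_div_comm, ← pow_add, sum_mul_sum,
      ← Fintype.sum_prod_type', ← (Fin.appendEquiv k j).sum_comp, ← sub_div, ← sum_sub_distrib]
    simp only [Fin.appendEquiv, Equiv.coe_fn_mk, image_univ_append]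
  have hcount : (n : ℝ) * ∑ p : (Fin k → Fin n) × (Fin j → Fin n),
      (#{st : Fin k × Fin j | p.1 st.1 = p.2 st.2} : ℝ) = k * j * n ^ (k + j) := by
    have := card_mul_sum_card_filter_apply_eq_apply (ι := Fin k) (κ := Fin j) (β := Fin n)
    simp only [Fintype.card_fin] at this
    exact_mod_cast this
  rw [hsplit, norm_div, norm_pow, Complex.norm_natCast]
  calc _ ≤ (2 * r ^ (k + j) * ∑ p : (Fin k → Fin n) × (Fin j → Fin n),
        (#{st : Fin k × Fin j | p.1 st.1 = p.2 st.2} : ℝ)) / n ^ (k + j) := by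
        rw [mul_sum]
        gcongr
        exact norm_sum_le_of_le _ fun p _ ↦ norm_pow_card_image_union_sub_le p.1 p.2 hr hz
    _ = 2 * k * j * r ^ (k + j) / n := by
        rw [div_eq_div_iff (by positivity) (by positivity)]
        linear_combination (2 * r ^ (k + j)) * hcount

theorem norm_bernC_pow_sub_mul_le (n : ℕ) {k m : ℕ} (hkm : k ≤ m) {r : ℝ} (hr : 1 ≤ r) {z : ℂ}
    (hz : ‖z‖ ≤ r) :
    ‖bernC n (· ^ m) z - bernC n (· ^ k) z * bernC n (· ^ (m - k)) z‖ ≤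
      6 * (1 + r) / n * (m ^ 2 * r ^ (m - 1)) := by
  have h := norm_bernC_pow_add_sub_mul_le n k (m - k) hr hz
  rw [Nat.add_sub_cancel' hkm] at h
  refine h.trans ?_
  have hr₀ : 0 ≤ r := zero_le_one.trans hr
  have hprod : (k : ℝ) * (m - k : ℕ) ≤ m ^ 2 := by
    exact_mod_cast (Nat.mul_le_mul hkm (m.sub_le k)).trans_eq (sq m).symm
  have hpow : r ^ m ≤ (1 + r) * r ^ (m - 1) := by
    rcases m with _ | m
    · simp [hr₀]
    · rw [pow_succ', Nat.add_sub_cancel]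
      gcongr
      linarith
  rw [div_mul_eq_mul_div]
  refine div_le_div_of_nonneg_right ?_ n.cast_nonneg
  calc 2 * k * (m - k : ℕ) * r ^ m = 2 * ((k : ℝ) * (m - k : ℕ)) * r ^ m := by ring
    _ ≤ 2 * m ^ 2 * ((1 + r) * r ^ (m - 1)) := by gcongr
    _ ≤ 6 * (1 + r) * (m ^ 2 * r ^ (m - 1)) := by
        nlinarith [show 0 ≤ (m : ℝ) ^ 2 * ((1 + r) * r ^ (m - 1)) by positivity]

theorem summable_norm_mul_pow_of_summable {a : ℕ → ℂ} {R : ℝ}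
    (ha : ∀ z : ℂ, ‖z‖ < R → Summable fun k ↦ a k * z ^ k) {t : ℝ} (ht : 0 ≤ t) (htR : t < R) :
    Summable fun k ↦ ‖a k‖ * t ^ k := by
  obtain ⟨ρ, htρ, hρR⟩ := exists_between htR
  have hρ : 0 < ρ := ht.trans_lt htρ
  have hsum := ha ρ (by rwa [Complex.norm_real, Real.norm_of_nonneg hρ.le])
  obtain ⟨C, hC⟩ := hsum.tendsto_atTop_zero.norm.bddAbove_range
  have hq : t / ρ < 1 := (div_lt_one hρ).2 htρ
  refine ((summable_geometric_of_lt_one (by positivity) hq).mul_left C).of_nonneg_of_le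
    (fun k ↦ by positivity) fun k ↦ ?_
  have hCk : ‖a k‖ * ρ ^ k ≤ C := by
    simpa [norm_mul, norm_pow, Complex.norm_real, abs_of_pos hρ] using hC (Set.mem_range_self k)
  calc ‖a k‖ * t ^ k = ‖a k‖ * ρ ^ k * (t / ρ) ^ k := by rw [div_pow]; field_simp
    _ ≤ C * (t / ρ) ^ k := by gcongr

theorem summable_pow_mul_mul_pow_of_summable_mul_pow {c : ℕ → ℝ} (hc : ∀ m, 0 ≤ c m) {r ρ : ℝ}
    (hr : 0 ≤ r) (hrρ : r < ρ) (h : Summable fun m ↦ c m * ρ ^ m) (p : ℕ) :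
    Summable fun m : ℕ ↦ (m : ℝ) ^ p * c m * r ^ m := by
  have hρ : 0 < ρ := hr.trans_lt hrρ
  have hq : |r / ρ| < 1 := by rwa [abs_of_nonneg (by positivity), div_lt_one hρ]
  obtain ⟨C, hC⟩ := (tendsto_pow_const_mul_const_pow_of_abs_lt_one p hq).bddAbove_range
  refine (h.mul_left C).of_nonneg_of_le (fun m ↦ by have := hc m; positivity) fun m ↦ ?_
  calc (m : ℝ) ^ p * c m * r ^ m = c m * ρ ^ m * ((m : ℝ) ^ p * (r / ρ) ^ m) := by
        rw [div_pow]
        field_simp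
    _ ≤ c m * ρ ^ m * C := by
        have := hc m
        gcongr
        exact hC (Set.mem_range_self m)
    _ = C * (c m * ρ ^ m) := mul_comm _ _

theorem summable_sq_mul_sum_mul_pow {E : Type*} [SeminormedAddCommGroup E] {a b : ℕ → E}
    {r ρ : ℝ} (hr : 1 ≤ r) (hrρ : r < ρ) (ha : Summable fun k ↦ ‖a k‖ * ρ ^ k)
    (hb : Summable fun k ↦ ‖b k‖ * ρ ^ k) :
    Summable fun m : ℕ ↦
      (m : ℝ) ^ 2 * (∑ j ∈ range (m + 1), ‖a j‖ * ‖b (m - j)‖) * r ^ (m - 1) := by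
  have hr₀ : 0 ≤ r := zero_le_one.trans hr
  have hρ : 0 ≤ ρ := hr₀.trans hrρ.le
  have hcauchy : Summable fun m ↦ (∑ j ∈ range (m + 1), ‖a j‖ * ‖b (m - j)‖) * ρ ^ m := by
    have := summable_norm_sum_mul_range_of_summable_norm (f := fun k ↦ ‖a k‖ * ρ ^ k)
      (g := fun k ↦ ‖b k‖ * ρ ^ k) (by simpa [abs_of_nonneg hρ] using ha)
      (by simpa [abs_of_nonneg hρ] using hb)
    refine this.of_norm.congr fun m ↦ ?_
    rw [sum_mul]
    refine sum_congr rfl fun j hj ↦ ?_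
    rw [← pow_mul_pow_sub ρ (Nat.lt_succ_iff.1 (mem_range.1 hj))]
    ring
  refine (summable_pow_mul_mul_pow_of_summable_mul_pow
    (fun m ↦ sum_nonneg fun j _ ↦ by positivity) hr₀ hrρ hcauchy 2).of_nonneg_of_le
    (fun m ↦ by positivity) fun m ↦ ?_
  exact mul_le_mul_of_nonneg_left (pow_le_pow_right₀ hr (m.sub_le 1)) (by positivity)

theorem hasSum_bernC {F : ℂ → ℂ} {a : ℕ → ℂ}
    (hF : ∀ w : ℂ, ‖w‖ ≤ 1 → HasSum (fun k ↦ a k * w ^ k) (F w)) (n : ℕ) (z : ℂ) :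
    HasSum (fun k ↦ a k * bernC n (· ^ k) z) (bernC n F z) := by
  have hnode : ∀ i ∈ range (n + 1), ‖(i : ℂ) / n‖ ≤ 1 := fun i hi ↦ by
    rw [norm_div, Complex.norm_natCast, Complex.norm_natCast]
    exact div_le_one_of_le₀ (by exact_mod_cast Nat.lt_succ_iff.1 (mem_range.1 hi)) n.cast_nonneg
  have hterms : (fun k ↦ a k * bernC n (· ^ k) z) = fun k ↦ ∑ i ∈ range (n + 1),
      (n.choose i : ℂ) * z ^ i * (1 - z) ^ (n - i) * (a k * ((i : ℂ) / n) ^ k) := by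
    funext k
    rw [bernC, mul_sum]
    exact sum_congr rfl fun i _ ↦ by ring
  rw [hterms]
  exact hasSum_sum fun i hi ↦ (hF _ (hnode i hi)).mul_left _

theorem hasSum_sum_range_mul_mul_pow {R : Type*} [NormedCommRing R] [CompleteSpace R]
    {a b : ℕ → R} {w F G : R} (ha : Summable fun k ↦ ‖a k * w ^ k‖)
    (hb : Summable fun k ↦ ‖b k * w ^ k‖) (hF : HasSum (fun k ↦ a k * w ^ k) F)
    (hG : HasSum (fun k ↦ b k * w ^ k) G) :
    HasSum (fun m ↦ (∑ j ∈ range (m + 1), a j * b (m - j)) * w ^ m) (F * G) := by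
  have h := hasSum_sum_range_mul_of_summable_norm ha hb
  rw [hF.tsum_eq, hG.tsum_eq] at h
  convert h using 2 with m
  rw [sum_mul]
  refine sum_congr rfl fun j hj ↦ ?_
  rw [← pow_mul_pow_sub w (Nat.lt_succ_iff.1 (mem_range.1 hj))]
  ring

theorem summable_norm_mul_of_norm_le_pow {R : Type*} [SeminormedRing R] {a x : ℕ → R} {r : ℝ}
    (hx : ∀ k, ‖x k‖ ≤ r ^ k) (ha : Summable fun k ↦ ‖a k‖ * r ^ k) :
    Summable fun k ↦ ‖a k * x k‖ :=
  ha.of_nonneg_of_le (fun _ ↦ norm_nonneg _) fun k ↦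
    (norm_mul_le _ _).trans (mul_le_mul_of_nonneg_left (hx k) (norm_nonneg _))

theorem hasSum_bernC_mul_sub_mul {f g : ℂ → ℂ} {a b : ℕ → ℂ} {r : ℝ} (hr : 1 ≤ r)
    (ha : Summable fun k ↦ ‖a k‖ * r ^ k) (hb : Summable fun k ↦ ‖b k‖ * r ^ k)
    (hf : ∀ w : ℂ, ‖w‖ ≤ 1 → HasSum (fun k ↦ a k * w ^ k) (f w))
    (hg : ∀ w : ℂ, ‖w‖ ≤ 1 → HasSum (fun k ↦ b k * w ^ k) (g w)) (n : ℕ) {z : ℂ}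
    (hz : ‖z‖ ≤ r) :
    HasSum (fun m ↦ ∑ k ∈ range (m + 1), a k * b (m - k) *
        (bernC n (· ^ m) z - bernC n (· ^ k) z * bernC n (· ^ (m - k)) z))
      (bernC n (fun w ↦ f w * g w) z - bernC n f z * bernC n g z) := by
  have hfg (w : ℂ) (hw : ‖w‖ ≤ 1) :
      HasSum (fun m ↦ (∑ j ∈ range (m + 1), a j * b (m - j)) * w ^ m) (f w * g w) := by
    have hpow (k : ℕ) : ‖w ^ k‖ ≤ r ^ k := norm_pow_le_pow_of_le hr (hw.trans hr) le_rfl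
    exact hasSum_sum_range_mul_mul_pow (summable_norm_mul_of_norm_le_pow hpow ha)
      (summable_norm_mul_of_norm_le_pow hpow hb) (hf w hw) (hg w hw)
  have hB (k : ℕ) : ‖bernC n (· ^ k) z‖ ≤ r ^ k := norm_bernC_pow_le n k hr hz
  have hprod := hasSum_sum_range_mul_of_summable_norm
    (f := fun k ↦ a k * bernC n (· ^ k) z) (g := fun k ↦ b k * bernC n (· ^ k) z)
    (summable_norm_mul_of_norm_le_pow hB ha) (summable_norm_mul_of_norm_le_pow hB hb)
  rw [(hasSum_bernC hf n z).tsum_eq, (hasSum_bernC hg n z).tsum_eq] at hprod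
  refine ((hasSum_bernC hfg n z).sub hprod).congr_fun fun m ↦ ?_
  rw [sum_mul, ← sum_sub_distrib]
  exact sum_congr rfl fun k _ ↦ by ring

theorem bernsteinC_gruss_estimate_general (R r : ℝ) (hR : 1 < R) (hr : 1 ≤ r) (hrR : r < R)
    (f g : ℂ → ℂ) (a b : ℕ → ℂ)
    (hf : ∀ z : ℂ, ‖z‖ < R → HasSum (fun k => a k * z ^ k) (f z))
    (hg : ∀ z : ℂ, ‖z‖ < R → HasSum (fun k => b k * z ^ k) (g z))
    (n : ℕ) :
    Summable (fun m : ℕ =>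
        (m : ℝ) ^ 2 * (∑ j ∈ Finset.range (m + 1), ‖a j‖ * ‖b (m - j)‖) * r ^ (m - 1)) ∧
    ∀ z : ℂ, ‖z‖ ≤ r →
      ‖bernC n (fun w => f w * g w) z - bernC n f z * bernC n g z‖ ≤
        6 * (1 + r) / n * ∑' m : ℕ,
          (m : ℝ) ^ 2 * (∑ j ∈ Finset.range (m + 1), ‖a j‖ * ‖b (m - j)‖) * r ^ (m - 1) := by
  have hr₀ : 0 ≤ r := zero_le_one.trans hr
  obtain ⟨ρ, hrρ, hρR⟩ := exists_between hrR
  have hcoeff {c : ℕ → ℂ} {F : ℂ → ℂ} (hF : ∀ z : ℂ, ‖z‖ < R → HasSum (fun k ↦ c k * z ^ k) (F z))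
      {t : ℝ} (ht : r ≤ t) (htR : t < R) : Summable fun k ↦ ‖c k‖ * t ^ k :=
    summable_norm_mul_pow_of_summable (fun z hz ↦ (hF z hz).summable) (hr₀.trans ht) htR
  have hsum := summable_sq_mul_sum_mul_pow hr hrρ (hcoeff hf hrρ.le hρR) (hcoeff hg hrρ.le hρR)
  refine ⟨hsum, fun z hz ↦ ?_⟩
  have hdiff := hasSum_bernC_mul_sub_mul hr (hcoeff hf le_rfl hrR) (hcoeff hg le_rfl hrR)
    (fun w hw ↦ hf w (hw.trans_lt hR)) (fun w hw ↦ hg w (hw.trans_lt hR)) n hz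
  rw [← tsum_mul_left]
  refine hdiff.norm_le_of_bounded (hsum.mul_left _).hasSum fun m ↦ ?_
  calc _ ≤ ∑ k ∈ range (m + 1),
        ‖a k‖ * ‖b (m - k)‖ * (6 * (1 + r) / n * ((m : ℝ) ^ 2 * r ^ (m - 1))) := by
        refine norm_sum_le_of_le _ fun k hk ↦ ?_
        rw [norm_mul, norm_mul]
        gcongr
        exact norm_bernC_pow_sub_mul_le n (Nat.lt_succ_iff.1 (mem_range.1 hk)) hr hz
    _ = _ := by
        rw [← sum_mul]
        ring

theorem bernsteinC_gruss_estimate (R r : ℝ) (hR : 1 < R) (hr : 1 ≤ r) (hrR : r < R)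
    (f g : ℂ → ℂ) (a b : ℕ → ℂ)
    (hf : ∀ z : ℂ, ‖z‖ < R → HasSum (fun k => a k * z ^ k) (f z))
    (hg : ∀ z : ℂ, ‖z‖ < R → HasSum (fun k => b k * z ^ k) (g z))
    (n : ℕ) (hn : 1 ≤ n) :
    Summable (fun m : ℕ =>
        (m : ℝ) ^ 2 * (∑ j ∈ Finset.range (m + 1), ‖a j‖ * ‖b (m - j)‖) * r ^ (m - 1)) ∧
    ∀ z : ℂ, ‖z‖ ≤ r →
      ‖bernC n (fun w => f w * g w) z - bernC n f z * bernC n g z‖ ≤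
        6 * (1 + r) / n * ∑' m : ℕ,
          (m : ℝ) ^ 2 * (∑ j ∈ Finset.range (m + 1), ‖a j‖ * ‖b (m - j)‖) * r ^ (m - 1) :=
  bernsteinC_gruss_estimate_general R r hR hr hrR f g a b hf hg n
end

section
/- For the Pǎltǎnea operators $U_n^\rho$ with $\rho>0$, the second moment satisfies $U_n^\rho((e_1-x)^2)(x)=\frac{(\rho+1)x(1-x)}{n\rho+1}$ for all $x\in[0,1]$ and $n\ge 1$. -/
open Real

/-- Euler Beta function. -/
noncomputable def betaFn (x y : ℝ) : ℝ :=
  ∫ t in (0 : ℝ)..1, t ^ (x - 1) * (1 - t) ^ (y - 1)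

/-- Bernstein basis polynomial `p_{n,k}(x) = C(n,k) x^k (1-x)^{n-k}`. -/
noncomputable def p (n k : ℕ) (x : ℝ) : ℝ :=
  (n.choose k : ℝ) * x ^ k * (1 - x) ^ (n - k)

/-- The density `μ_{n,k}^ρ`. -/
noncomputable def muP (n k : ℕ) (ρ : ℝ) (t : ℝ) : ℝ :=
  t ^ ((k : ℝ) * ρ - 1) * (1 - t) ^ (((n : ℝ) - (k : ℝ)) * ρ - 1) /
    betaFn ((k : ℝ) * ρ) (((n : ℝ) - (k : ℝ)) * ρ)

/-- The Pǎltǎnea operator `U_n^ρ`. -/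
noncomputable def palt (n : ℕ) (ρ : ℝ) (f : ℝ → ℝ) (x : ℝ) : ℝ :=
  ∑ k ∈ Finset.Icc 1 (n - 1), (∫ t in (0 : ℝ)..1, f t * muP n k ρ t) * p n k x
    + f 0 * (1 - x) ^ n + f 1 * x ^ n

/-!
Each density `μ_{n,k}^ρ` is a Beta density, and `B(a + 1, b) = a / (a + b) · B(a, b)` gives its
first two moments; hence `∫ (t - x)² μ_{n,k}^ρ(t) dt` is a quadratic polynomial in `k`, whose values
at `k = 0` and `k = n` are exactly the boundary terms `x²` and `(1 - x)²`. So `U_n^ρ((e₁ - x)²)(x)`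
is the Bernstein sum of a quadratic in `k`, which the Bernstein identities `∑ p_{n,k} = 1`,
`∑ k p_{n,k} = n x` and `∑ (n x - k)² p_{n,k} = n x (1 - x)` evaluate.
-/

lemma betaIntegrand_ofReal {a b t : ℝ} (ht : t ∈ Set.Icc (0 : ℝ) 1) :
    (t : ℂ) ^ ((a : ℂ) - 1) * (1 - (t : ℂ)) ^ ((b : ℂ) - 1)
      = ((t ^ (a - 1) * (1 - t) ^ (b - 1) : ℝ) : ℂ) := by
  push_cast [Complex.ofReal_cpow ht.1, Complex.ofReal_cpow (sub_nonneg.2 ht.2)]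
  rfl

lemma intervalIntegrable_betaIntegrand {a b : ℝ} (ha : 0 < a) (hb : 0 < b) :
    IntervalIntegrable (fun t => t ^ (a - 1) * (1 - t) ^ (b - 1)) MeasureTheory.volume 0 1 := by
  have h := ((intervalIntegrable_iff_integrableOn_Ioc_of_le zero_le_one).1
    (Complex.betaIntegral_convergent (u := a) (v := b) (by simpa using ha) (by simpa using hb))).re
  rw [intervalIntegrable_iff_integrableOn_Ioc_of_le zero_le_one]
  refine MeasureTheory.IntegrableOn.congr_fun h (fun t ht => ?_) measurableSet_Ioc
  simp only [betaIntegrand_ofReal (Set.Ioc_subset_Icc_self ht), RCLike.re_to_complex,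
    Complex.ofReal_re]

lemma betaFn_eq_beta {a b : ℝ} (ha : 0 < a) (hb : 0 < b) :
    betaFn a b = ProbabilityTheory.beta a b := by
  rw [ProbabilityTheory.beta_eq_betaIntegralReal a b ha hb, Complex.betaIntegral,
    intervalIntegral.integral_congr (fun t ht => betaIntegrand_ofReal
      (by rwa [Set.uIcc_of_le zero_le_one] at ht)),
    intervalIntegral.integral_ofReal, Complex.ofReal_re, betaFn]

lemma betaFn_pos {a b : ℝ} (ha : 0 < a) (hb : 0 < b) : 0 < betaFn a b :=
  betaFn_eq_beta ha hb ▸ ProbabilityTheory.beta_pos ha hb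

lemma betaFn_add_one_left {a b : ℝ} (ha : 0 < a) (hb : 0 < b) :
    betaFn (a + 1) b = a / (a + b) * betaFn a b := by
  have hab : 0 < a + b := add_pos ha hb
  rw [betaFn_eq_beta (by linarith) hb, betaFn_eq_beta ha hb, ProbabilityTheory.beta,
    ProbabilityTheory.beta, add_right_comm, Real.Gamma_add_one ha.ne',
    Real.Gamma_add_one hab.ne']
  have := (Real.Gamma_pos_of_pos hab).ne'
  field_simp

noncomputable def betaDensity (a b t : ℝ) : ℝ :=
  t ^ (a - 1) * (1 - t) ^ (b - 1) / betaFn a b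

lemma muP_eq_betaDensity (n k : ℕ) (ρ : ℝ) :
    muP n k ρ = betaDensity ((k : ℝ) * ρ) (((n : ℝ) - (k : ℝ)) * ρ) := rfl

section BetaDensity

variable {a b : ℝ}

lemma intervalIntegrable_betaDensity (ha : 0 < a) (hb : 0 < b) :
    IntervalIntegrable (betaDensity a b) MeasureTheory.volume 0 1 :=
  (intervalIntegrable_betaIntegrand ha hb).div_const _

lemma integral_betaDensity (ha : 0 < a) (hb : 0 < b) :
    ∫ t in (0 : ℝ)..1, betaDensity a b t = 1 := by
  unfold betaDensity
  rw [intervalIntegral.integral_div, ← betaFn, div_self (betaFn_pos ha hb).ne']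

lemma mul_betaDensity (ha : 0 < a) (hb : 0 < b) {t : ℝ} (ht : t ∈ Set.Icc (0 : ℝ) 1) :
    t * betaDensity a b t = a / (a + b) * betaDensity (a + 1) b t := by
  have hB := (betaFn_pos ha hb).ne'
  have hab := (add_pos ha hb).ne'
  have hpow : t ^ a = t * t ^ (a - 1) := by
    rw [mul_comm, ← Real.rpow_add_one' ht.1 (by simpa using ha.ne'), sub_add_cancel]
  rw [betaDensity, betaDensity, betaFn_add_one_left ha hb, add_sub_cancel_right, hpow]
  field_simp

lemma integral_mul_betaDensity (ha : 0 < a) (hb : 0 < b) :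
    ∫ t in (0 : ℝ)..1, t * betaDensity a b t = a / (a + b) := by
  rw [intervalIntegral.integral_congr fun t ht => mul_betaDensity ha hb
      (by rwa [Set.uIcc_of_le zero_le_one] at ht),
    intervalIntegral.integral_const_mul, integral_betaDensity (by linarith) hb, mul_one]

lemma integral_sq_mul_betaDensity (ha : 0 < a) (hb : 0 < b) :
    ∫ t in (0 : ℝ)..1, t ^ 2 * betaDensity a b t = a / (a + b) * ((a + 1) / (a + 1 + b)) := by
  rw [intervalIntegral.integral_congr fun t ht => show t ^ 2 * betaDensity a b t
      = a / (a + b) * (t * betaDensity (a + 1) b t) by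
    rw [sq, mul_assoc, mul_betaDensity ha hb (by rwa [Set.uIcc_of_le zero_le_one] at ht)]
    ring,
    intervalIntegral.integral_const_mul, integral_mul_betaDensity (by linarith) hb]

lemma integral_sub_sq_mul_betaDensity (ha : 0 < a) (hb : 0 < b) (x : ℝ) :
    ∫ t in (0 : ℝ)..1, (t - x) ^ 2 * betaDensity a b t
      = a / (a + b) * ((a + 1) / (a + 1 + b)) - 2 * x * (a / (a + b)) + x ^ 2 := by
  have h0 := intervalIntegrable_betaDensity ha hb
  have h1 := h0.continuousOn_mul (g := fun t => t) continuousOn_id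
  have h2 := h0.continuousOn_mul (g := (· ^ 2)) (continuousOn_pow 2)
  calc ∫ t in (0 : ℝ)..1, (t - x) ^ 2 * betaDensity a b t
      = ∫ t in (0 : ℝ)..1, (t ^ 2 * betaDensity a b t - 2 * x * (t * betaDensity a b t))
          + x ^ 2 * betaDensity a b t := by
        congr 1; ext t; ring
    _ = _ := by
        rw [intervalIntegral.integral_add (h2.sub (h1.const_mul _)) (h0.const_mul _),
          intervalIntegral.integral_sub h2 (h1.const_mul _), intervalIntegral.integral_const_mul,
          intervalIntegral.integral_const_mul, integral_sq_mul_betaDensity ha hb,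
          integral_mul_betaDensity ha hb, integral_betaDensity ha hb, mul_one]

end BetaDensity

lemma integral_sub_sq_mul_muP {ρ : ℝ} (hρ : 0 < ρ) {n k : ℕ} (hk : 0 < k) (hkn : k < n)
    (x : ℝ) :
    ∫ t in (0 : ℝ)..1, (t - x) ^ 2 * muP n k ρ t
      = k * (k * ρ + 1) / (n * (n * ρ + 1)) - 2 * x * (k / n) + x ^ 2 := by
  have hk' : (0 : ℝ) < k := Nat.cast_pos.2 hk
  have hkn' : (k : ℝ) < n := Nat.cast_lt.2 hkn
  rw [muP_eq_betaDensity, integral_sub_sq_mul_betaDensity (by positivity)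
      (mul_pos (sub_pos.2 hkn') hρ), show k * ρ + (n - k) * ρ = n * ρ by ring,
    show k * ρ + 1 + (n - k) * ρ = n * ρ + 1 by ring]
  have hn : (0 : ℝ) < n := hk'.trans hkn'
  field_simp

lemma palt_eq_sum_range {n : ℕ} (hn : 1 ≤ n) (ρ : ℝ) (f : ℝ → ℝ) (x : ℝ) (g : ℕ → ℝ)
    (hg0 : g 0 = f 0) (hgn : g n = f 1)
    (hg : ∀ k, 0 < k → k < n → ∫ t in (0 : ℝ)..1, f t * muP n k ρ t = g k) :
    palt n ρ f x = ∑ k ∈ Finset.range (n + 1), g k * p n k x := by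
  obtain ⟨m, rfl⟩ : ∃ m, n = m + 1 := ⟨n - 1, by omega⟩
  rw [palt, Finset.sum_range_succ, Finset.sum_range_eq_add_Ico _ (by omega),
    Nat.add_sub_cancel, Finset.Ico_add_one_right_eq_Icc]
  have hsum : ∑ k ∈ Finset.Icc 1 m, (∫ t in (0 : ℝ)..1, f t * muP (m + 1) k ρ t) * p (m + 1) k x
      = ∑ k ∈ Finset.Icc 1 m, g k * p (m + 1) k x :=
    Finset.sum_congr rfl fun k hk => by
      rw [Finset.mem_Icc] at hk
      rw [hg k (by omega) (by omega)]
  have hp0 : p (m + 1) 0 x = (1 - x) ^ (m + 1) := by simp [p]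
  have hpn : p (m + 1) (m + 1) x = x ^ (m + 1) := by simp [p]
  rw [hsum, hg0, hgn, hp0, hpn]
  ring

lemma p_eq_eval_bernsteinPolynomial (n k : ℕ) (x : ℝ) :
    p n k x = (bernsteinPolynomial ℝ n k).eval x := by
  simp [bernsteinPolynomial, p]

lemma sum_p (n : ℕ) (x : ℝ) : ∑ k ∈ Finset.range (n + 1), p n k x = 1 := by
  simpa [Polynomial.eval_finsetSum, p_eq_eval_bernsteinPolynomial]
    using congrArg (Polynomial.eval x) (bernsteinPolynomial.sum ℝ n)

lemma sum_natCast_mul_p (n : ℕ) (x : ℝ) :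
    ∑ k ∈ Finset.range (n + 1), (k : ℝ) * p n k x = n * x := by
  simpa [Polynomial.eval_finsetSum, p_eq_eval_bernsteinPolynomial]
    using congrArg (Polynomial.eval x) (bernsteinPolynomial.sum_smul ℝ n)

lemma sum_sub_sq_mul_p (n : ℕ) (x : ℝ) :
    ∑ k ∈ Finset.range (n + 1), (n * x - k) ^ 2 * p n k x = n * x * (1 - x) := by
  simpa [Polynomial.eval_finsetSum, p_eq_eval_bernsteinPolynomial]
    using congrArg (Polynomial.eval x) (bernsteinPolynomial.variance ℝ n)

lemma sum_quadratic_mul_p (n : ℕ) (x A B C : ℝ) :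
    ∑ k ∈ Finset.range (n + 1), (A * k ^ 2 + B * k + C) * p n k x
      = A * (n * x) ^ 2 + B * (n * x) + C + A * (n * x * (1 - x)) := by
  calc ∑ k ∈ Finset.range (n + 1), (A * k ^ 2 + B * k + C) * p n k x
      = ∑ k ∈ Finset.range (n + 1), (A * ((n * x - k) ^ 2 * p n k x)
          + (B + 2 * A * (n * x)) * (k * p n k x) + (C - A * (n * x) ^ 2) * p n k x) := by
        congr 1; ext k; ring
    _ = _ := by
        rw [Finset.sum_add_distrib, Finset.sum_add_distrib, ← Finset.mul_sum, ← Finset.mul_sum,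
          ← Finset.mul_sum, sum_sub_sq_mul_p, sum_natCast_mul_p, sum_p]
        ring

theorem paltanea_second_moment_general (ρ : ℝ) (hρ : 0 < ρ) (n : ℕ) (hn : 1 ≤ n)
    (x : ℝ) :
    palt n ρ (fun t => (t - x) ^ 2) x = (ρ + 1) * x * (1 - x) / ((n : ℝ) * ρ + 1) := by
  have hn' : (0 : ℝ) < n := Nat.cast_pos.2 hn
  set m : ℝ → ℝ := fun y => y * (y * ρ + 1) / (n * (n * ρ + 1)) - 2 * x * (y / n) + x ^ 2
  calc palt n ρ (fun t => (t - x) ^ 2) x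
      = ∑ k ∈ Finset.range (n + 1), m k * p n k x :=
        palt_eq_sum_range hn ρ _ x (fun k => m k) (by simp [m]) (by simp only [m]; field_simp; ring)
          fun k hk hkn => integral_sub_sq_mul_muP hρ hk hkn x
    _ = ∑ k ∈ Finset.range (n + 1),
          (ρ / (n * (n * ρ + 1)) * k ^ 2 + (1 / (n * (n * ρ + 1)) - 2 * x / n) * k + x ^ 2)
            * p n k x := by
        congr 1; ext k; simp only [m]; ring
    _ = (ρ + 1) * x * (1 - x) / ((n : ℝ) * ρ + 1) := by
        rw [sum_quadratic_mul_p]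
        field_simp
        ring

theorem paltanea_second_moment (ρ : ℝ) (hρ : 0 < ρ) (n : ℕ) (hn : 1 ≤ n)
    (x : ℝ) (hx : x ∈ Set.Icc (0 : ℝ) 1) :
    palt n ρ (fun t => (t - x) ^ 2) x = (ρ + 1) * x * (1 - x) / ((n : ℝ) * ρ + 1) :=
  paltanea_second_moment_general ρ hρ n hn x
end

section
/- Let $f,g$ be analytic on $\{|z|<R\}$ with $R>r\ge 1$. Assume the quantitative Voronovskaya bounds: there exist constants $C_1,C_2,C_3$ with $|B_n(h)(z)-h(z)-\frac{z(1-z)h''(z)}{2n}|\le \frac{C_h}{n^2}$ for $h\in\{fg,f,g\}$ and all $|z|\le r$, and approximation bounds $|B_n(h)(z)-h(z)|\le \frac{D_h}{n}$ for $h\in\{f,g\}$. Then there is $C=C(r,f,g)$ with $|B_n(fg)(z)-B_n(f)(z)B_n(g)(z)-\frac{z(1-z)f'(z)g'(z)}{n}|\le \frac{C}{n^2}$ for all $n\ge 1$ and $|z|\le r$. -/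
/-!
By the Leibniz rule `(fg)'' = f g'' + 2 f' g' + f'' g`, the Grüss defect
`Bₙ(fg) - Bₙf · Bₙg - z(1-z) f' g' / n` equals the Voronovskaya remainder of `fg`, minus `f` and
`g` times the Voronovskaya remainders of `g` and `f`, minus the product of the two approximation
errors `Bₙf - f` and `Bₙg - g`. Each of these is `O(1/n²)`, since `f` and `g` are bounded on the
compact disc `|z| ≤ r`.
-/

open Complex

theorem deriv_deriv_mul {𝕜 𝔸 : Type*} [NontriviallyNormedField 𝕜] [NormedRing 𝔸]
    [NormedAlgebra 𝕜 𝔸] {f g : 𝕜 → 𝔸} {x : 𝕜}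
    (hf : ContDiffAt 𝕜 2 f x) (hg : ContDiffAt 𝕜 2 g x) :
    deriv (deriv fun y => f y * g y) x =
      f x * deriv (deriv g) x + 2 * deriv f x * deriv g x + deriv (deriv f) x * g x := by
  have h := iteratedDeriv_mul hf hg
  simp only [iteratedDeriv_succ, iteratedDeriv_zero, Finset.sum_range_succ, Finset.range_one,
    Finset.sum_singleton, Nat.choose, Nat.cast_one, one_mul, tsub_zero, add_zero,
    Nat.add_one_sub_one, tsub_self] at h
  exact h

theorem gruss_voronovskaya_decomposition {𝕜 : Type*} [Field 𝕜] [CharZero 𝕜]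
    (bfg bf bg f g f' g' f'' g'' c n : 𝕜) :
    bfg - bf * bg - c * f' * g' / n =
      (bfg - f * g - c * (f * g'' + 2 * f' * g' + f'' * g) / (2 * n))
        - f * (bg - g - c * g'' / (2 * n)) - g * (bf - f - c * f'' / (2 * n))
        - (bf - f) * (bg - g) := by
  ring

theorem norm_sub_mul_sub_mul_sub_mul_le {A : Type*} [SeminormedRing A] (a x b y c p q : A) :
    ‖a - x * b - y * c - p * q‖ ≤ ‖a‖ + ‖x‖ * ‖b‖ + ‖y‖ * ‖c‖ + ‖p‖ * ‖q‖ := by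
  calc ‖a - x * b - y * c - p * q‖ ≤ ‖a‖ + ‖x * b‖ + ‖y * c‖ + ‖p * q‖ := by
        refine (norm_sub_le _ _).trans ?_
        gcongr
        refine (norm_sub_le _ _).trans ?_
        gcongr
        exact norm_sub_le _ _
    _ ≤ ‖a‖ + ‖x‖ * ‖b‖ + ‖y‖ * ‖c‖ + ‖p‖ * ‖q‖ := by
        gcongr <;> exact norm_mul_le _ _

theorem norm_gruss_voronovskaya_le {𝕜 : Type*} [NormedField 𝕜] [CharZero 𝕜]
    {bfg bf bg f g f' g' f'' g'' c n : 𝕜} {ε₁ ε₂ ε₃ δ₁ δ₂ M N : ℝ}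
    (hfg : ‖bfg - f * g - c * (f * g'' + 2 * f' * g' + f'' * g) / (2 * n)‖ ≤ ε₁)
    (hf : ‖bf - f - c * f'' / (2 * n)‖ ≤ ε₂) (hg : ‖bg - g - c * g'' / (2 * n)‖ ≤ ε₃)
    (hδf : ‖bf - f‖ ≤ δ₁) (hδg : ‖bg - g‖ ≤ δ₂) (hM : ‖f‖ ≤ M) (hN : ‖g‖ ≤ N) :
    ‖bfg - bf * bg - c * f' * g' / n‖ ≤ ε₁ + M * ε₃ + N * ε₂ + δ₁ * δ₂ := by
  rw [gruss_voronovskaya_decomposition bfg bf bg f g f' g' f'' g'' c n]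
  refine (norm_sub_mul_sub_mul_sub_mul_le _ _ _ _ _ _ _).trans ?_
  have hM₀ : 0 ≤ M := (norm_nonneg _).trans hM
  have hN₀ : 0 ≤ N := (norm_nonneg _).trans hN
  have hδ₀ : 0 ≤ δ₁ := (norm_nonneg _).trans hδf
  gcongr

theorem bernsteinC_gruss_voronovskaya_general (R r : ℝ) (hrR : r < R)
    (f g : ℂ → ℂ)
    (hf : AnalyticOn ℂ f (Metric.ball (0 : ℂ) R))
    (hg : AnalyticOn ℂ g (Metric.ball (0 : ℂ) R))
    (C₁ C₂ C₃ D₁ D₂ : ℝ)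
    (hvfg : ∀ n : ℕ, 1 ≤ n → ∀ z : ℂ, ‖z‖ ≤ r →
      ‖bernC n (fun w => f w * g w) z - f z * g z -
          z * (1 - z) * deriv (deriv (fun w => f w * g w)) z / (2 * n)‖ ≤ C₁ / (n : ℝ) ^ 2)
    (hvf : ∀ n : ℕ, 1 ≤ n → ∀ z : ℂ, ‖z‖ ≤ r →
      ‖bernC n f z - f z - z * (1 - z) * deriv (deriv f) z / (2 * n)‖ ≤ C₂ / (n : ℝ) ^ 2)
    (hvg : ∀ n : ℕ, 1 ≤ n → ∀ z : ℂ, ‖z‖ ≤ r →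
      ‖bernC n g z - g z - z * (1 - z) * deriv (deriv g) z / (2 * n)‖ ≤ C₃ / (n : ℝ) ^ 2)
    (haf : ∀ n : ℕ, 1 ≤ n → ∀ z : ℂ, ‖z‖ ≤ r → ‖bernC n f z - f z‖ ≤ D₁ / n)
    (hag : ∀ n : ℕ, 1 ≤ n → ∀ z : ℂ, ‖z‖ ≤ r → ‖bernC n g z - g z‖ ≤ D₂ / n) :
    ∃ C : ℝ, ∀ n : ℕ, 1 ≤ n → ∀ z : ℂ, ‖z‖ ≤ r →
      ‖bernC n (fun w => f w * g w) z - bernC n f z * bernC n g z -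
          z * (1 - z) * deriv f z * deriv g z / n‖ ≤ C / (n : ℝ) ^ 2 := by
  have hsub : Metric.closedBall (0 : ℂ) r ⊆ Metric.ball 0 R := Metric.closedBall_subset_ball hrR
  obtain ⟨M, hM⟩ :=
    (isCompact_closedBall (0 : ℂ) r).exists_bound_of_continuousOn (hf.continuousOn.mono hsub)
  obtain ⟨N, hN⟩ :=
    (isCompact_closedBall (0 : ℂ) r).exists_bound_of_continuousOn (hg.continuousOn.mono hsub)
  refine ⟨C₁ + M * C₃ + N * C₂ + D₁ * D₂, fun n hn z hz => ?_⟩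
  have hz' : z ∈ Metric.closedBall (0 : ℂ) r := mem_closedBall_zero_iff.mpr hz
  have hzR : Metric.ball (0 : ℂ) R ∈ nhds z := Metric.isOpen_ball.mem_nhds (hsub hz')
  have hleibniz := deriv_deriv_mul ((hf.analyticAt hzR).contDiffAt (n := 2))
    ((hg.analyticAt hzR).contDiffAt (n := 2))
  have hvfg' := hvfg n hn z hz
  rw [hleibniz] at hvfg'
  refine (norm_gruss_voronovskaya_le hvfg' (hvf n hn z hz) (hvg n hn z hz) (haf n hn z hz)
    (hag n hn z hz) (hM z hz') (hN z hz')).trans_eq ?_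
  ring

theorem bernsteinC_gruss_voronovskaya (R r : ℝ) (hr : 1 ≤ r) (hrR : r < R)
    (f g : ℂ → ℂ)
    (hf : AnalyticOn ℂ f (Metric.ball (0 : ℂ) R))
    (hg : AnalyticOn ℂ g (Metric.ball (0 : ℂ) R))
    (C₁ C₂ C₃ D₁ D₂ : ℝ)
    (hvfg : ∀ n : ℕ, 1 ≤ n → ∀ z : ℂ, ‖z‖ ≤ r →
      ‖bernC n (fun w => f w * g w) z - f z * g z -
          z * (1 - z) * deriv (deriv (fun w => f w * g w)) z / (2 * n)‖ ≤ C₁ / (n : ℝ) ^ 2)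
    (hvf : ∀ n : ℕ, 1 ≤ n → ∀ z : ℂ, ‖z‖ ≤ r →
      ‖bernC n f z - f z - z * (1 - z) * deriv (deriv f) z / (2 * n)‖ ≤ C₂ / (n : ℝ) ^ 2)
    (hvg : ∀ n : ℕ, 1 ≤ n → ∀ z : ℂ, ‖z‖ ≤ r →
      ‖bernC n g z - g z - z * (1 - z) * deriv (deriv g) z / (2 * n)‖ ≤ C₃ / (n : ℝ) ^ 2)
    (haf : ∀ n : ℕ, 1 ≤ n → ∀ z : ℂ, ‖z‖ ≤ r → ‖bernC n f z - f z‖ ≤ D₁ / n)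
    (hag : ∀ n : ℕ, 1 ≤ n → ∀ z : ℂ, ‖z‖ ≤ r → ‖bernC n g z - g z‖ ≤ D₂ / n) :
    ∃ C : ℝ, ∀ n : ℕ, 1 ≤ n → ∀ z : ℂ, ‖z‖ ≤ r →
      ‖bernC n (fun w => f w * g w) z - bernC n f z * bernC n g z -
          z * (1 - z) * deriv f z * deriv g z / n‖ ≤ C / (n : ℝ) ^ 2 :=
  bernsteinC_gruss_voronovskaya_general R r hrR f g hf hg C₁ C₂ C₃ D₁ D₂ hvfg hvf hvg haf hag
end
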